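/- arXiv:1006.4400 — 2 statements merged into one kernel-verified Lean document; each statement's English description precedes it below -/
import Mathlib

section
/- Suppose δ > 1 and sup_{k≥1} c_k < ∞. Then percolation does not occur in G_N: the probability that 0 belongs to an infinite cluster is 0 (equivalently, almost surely every connected component of G_N is finite). -/
open MeasureTheory ProbabilityTheory Filter

/-- The hierarchical group of order `N`: sequences with values in `{0, ..., N-1}`
(encoded as `ZMod N`), all but finitely many entries zero, with componentwise
addition mod `N`. -/
abbrev HierGroup (N : ℕ) := ℕ →₀ ZMod N

/-- The hierarchical distance: `0` if `x = y`, and otherwise the largest index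
(counted starting from `1`) where `x` and `y` differ. -/
noncomputable def hdist {N : ℕ} (x y : HierGroup N) : ℕ :=
  (x - y).support.sup fun i => i + 1

lemma hdist_comm {N : ℕ} (x y : HierGroup N) : hdist x y = hdist y x := by
  unfold hdist
  rw [← neg_sub y x, Finsupp.support_neg]

/-- The random graph determined by an edge configuration `ω`:
`x` and `y` are adjacent iff they are distinct and the edge `s(x,y)` is open. -/
def graphOf {V : Type*} {Ω : Type*} (E : Sym2 V → Ω → Bool) (ω : Ω) : SimpleGraph V where
  Adj x y := x ≠ y ∧ E s(x, y) ω = true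
  symm := by
    constructor
    intro x y h
    refine ⟨h.1.symm, ?_⟩
    rw [Sym2.eq_swap]
    exact h.2
  loopless := ⟨fun x h => h.1 rfl⟩

/-- `x` lies in an infinite cluster (connected component) of `G`. -/
def InInfiniteCluster {V : Type*} (G : SimpleGraph V) (x : V) : Prop :=
  {y | G.Reachable x y}.Infinite

/-- `G` has exactly one infinite connected component. -/
def UniqueInfiniteCluster {V : Type*} (G : SimpleGraph V) : Prop :=
  ∃! S : Set V, (∃ x, S = {y | G.Reachable x y}) ∧ S.Infinite

/-- The edge probabilities of the hierarchical random graph `G_N`: two distinct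
points at hierarchical distance `k` are joined with probability
`min (c k / N ^ (k * (1 + δ))) 1`. -/
def EdgeProbOK (N : ℕ) (δ : ℝ) (c : ℕ → ℝ) {Ω : Type*} [MeasurableSpace Ω]
    (μ : Measure Ω) (E : Sym2 (HierGroup N) → Ω → Bool) : Prop :=
  ∀ x y : HierGroup N, x ≠ y →
    μ {ω | E s(x, y) ω = true} =
      ENNReal.ofReal (min (c (hdist x y) / (N : ℝ) ^ ((hdist x y : ℝ) * (1 + δ))) 1)

/-- The `k`-ball containing `0` in the hierarchical group. -/
def hball (N : ℕ) (k : ℕ) : Set (HierGroup N) := {y | hdist 0 y ≤ k}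

/-- The `(j, l]`-annulus around `0` in the hierarchical group. -/
def hannulus (N : ℕ) (j l : ℕ) : Set (HierGroup N) :=
  {y | j < hdist 0 y ∧ hdist 0 y ≤ l}

/-- The restriction of a graph to a set `S` of vertices: only edges with both
endpoints in `S` are kept. -/
def restrictTo {V : Type*} (G : SimpleGraph V) (S : Set V) : SimpleGraph V where
  Adj a b := G.Adj a b ∧ a ∈ S ∧ b ∈ S
  symm := ⟨fun a b h => ⟨h.1.symm, h.2.2, h.2.1⟩⟩
  loopless := ⟨fun a h => G.loopless.irrefl a h.1⟩

/-- The cluster of `x` inside the `k`-ball `B_k` containing `0`, using only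
edges between points of `B_k`. -/
def clusterIn (N : ℕ) (G : SimpleGraph (HierGroup N)) (k : ℕ) (x : HierGroup N) :
    Set (HierGroup N) :=
  {y | (restrictTo G (hball N k)).Reachable x y}

/-- `S` is a largest cluster of the ball `B_k` containing `0` (in the graph `G`
restricted to `B_k`). -/
def IsLargestCluster (N : ℕ) (G : SimpleGraph (HierGroup N)) (k : ℕ)
    (S : Set (HierGroup N)) : Prop :=
  (∃ x ∈ hball N k, S = clusterIn N G k x) ∧
    ∀ x ∈ hball N k, (clusterIn N G k x).ncard ≤ S.ncard

/-- The hierarchical scales `k_n = ⌊K n log n⌋`. -/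
noncomputable def kseq (K : ℝ) (n : ℕ) : ℕ := ⌊K * n * Real.log n⌋₊

/-! If `0` lies in an infinite cluster then, for every `k`, some open edge joins the ball `B_k`
to a point at distance `j > k` from `0`. There are at most `N ^ k * N ^ j ≤ N ^ (2 * j)` such
pairs, each open with probability at most `M * N ^ (-j * (1 + δ))` where `M ≥ sup c_k`, so the
union bound gives `M * ∑_{j > k} (N ^ (1 - δ)) ^ j`: the tail of a convergent geometric series
because `δ > 1`. -/

open scoped ENNReal

lemma SimpleGraph.exists_adj_of_inInfiniteCluster {V : Type*} {G : SimpleGraph V} {s : Set V}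
    {x : V} (hs : s.Finite) (hx : x ∈ s) (h : InInfiniteCluster G x) :
    ∃ a ∈ s, ∃ b ∉ s, G.Adj a b := by
  obtain ⟨y, ⟨p⟩, hy⟩ : ∃ y, G.Reachable x y ∧ y ∉ s := by
    by_contra! hsub
    exact h (hs.subset hsub)
  obtain ⟨d, -, hd, hd'⟩ := p.exists_boundary_dart s hx hy
  exact ⟨d.fst, hd, d.snd, hd', d.adj⟩

lemma MeasureTheory.measure_biUnion_le_ncard_mul {α Ω : Type*} [MeasurableSpace Ω]
    (μ : Measure Ω) {s : Set α} (hs : s.Finite) {F : α → Set Ω} {p : ℝ≥0∞}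
    (hF : ∀ a ∈ s, μ (F a) ≤ p) : μ (⋃ a ∈ s, F a) ≤ s.ncard * p :=
  calc μ (⋃ a ∈ s, F a) = μ (⋃ a ∈ hs.toFinset, F a) := by simp
    _ ≤ ∑ a ∈ hs.toFinset, μ (F a) := measure_biUnion_finset_le _ _
    _ ≤ hs.toFinset.card • p := Finset.sum_le_card_nsmul _ _ _ (by simpa using hF)
    _ = s.ncard * p := by rw [nsmul_eq_mul, Set.ncard_eq_toFinset_card s hs]

def hsphere (N j : ℕ) : Set (HierGroup N) := {y | hdist 0 y = j}

section HierGroup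

variable {N : ℕ}

lemma hdist_self (x : HierGroup N) : hdist x x = 0 := by
  simp [hdist]

lemma hdist_zero_left (y : HierGroup N) : hdist 0 y = y.support.sup (· + 1) := by
  rw [hdist, zero_sub, Finsupp.support_neg]

lemma mem_hball_iff {k : ℕ} {y : HierGroup N} : y ∈ hball N k ↔ ∀ i, k ≤ i → y i = 0 := by
  simp only [hball, Set.mem_ofPred_eq, hdist_zero_left, Finset.sup_le_iff, Finsupp.mem_support_iff]
  exact forall_congr' fun i => by rw [not_imp_comm, not_le, Nat.lt_succ_iff]

lemma zero_mem_hball (k : ℕ) : (0 : HierGroup N) ∈ hball N k := by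
  simp [mem_hball_iff]

lemma hsphere_subset_hball (j : ℕ) : hsphere N j ⊆ hball N j :=
  fun _ hy => hy.le

lemma injOn_hball (k : ℕ) : Set.InjOn (fun (y : HierGroup N) (i : Fin k) => y i) (hball N k) := by
  intro y hy z hz h
  ext i
  by_cases hi : i < k
  · exact congrFun h ⟨i, hi⟩
  · rw [mem_hball_iff.mp hy i (by omega), mem_hball_iff.mp hz i (by omega)]

lemma hdist_zero_le_hdist {k : ℕ} {a b : HierGroup N} (ha : a ∈ hball N k)
    (hb : b ∉ hball N k) :
    hdist 0 b ≤ hdist a b := by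
  have hb0 : b.support.Nonempty := Finsupp.support_nonempty_iff.mpr <| by
    rintro rfl
    exact hb (zero_mem_hball k)
  obtain ⟨i, hi, hbi⟩ := Finset.exists_mem_eq_sup b.support hb0 (· + 1)
  have hki : k ≤ i := by
    by_contra! hik
    exact hb (by simp only [hball, Set.mem_ofPred_eq, hdist_zero_left, hbi]; omega)
  have hab : i ∈ (a - b).support := by
    simpa [mem_hball_iff.mp ha i hki] using hi
  rw [hdist_zero_left, hbi]
  exact Finset.le_sup hab

variable [NeZero N]

lemma hball_finite (k : ℕ) : (hball N k).Finite :=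
  (Set.toFinite _).of_finite_image (injOn_hball k)

lemma ncard_hball_le (k : ℕ) : (hball N k).ncard ≤ N ^ k :=
  calc (hball N k).ncard ≤ (Set.univ : Set (Fin k → ZMod N)).ncard :=
        Set.ncard_le_ncard_of_injOn _ (fun _ _ => Set.mem_univ _) (injOn_hball k)
    _ = N ^ k := by simp [Set.ncard_univ]

lemma ncard_hsphere_le (j : ℕ) : (hsphere N j).ncard ≤ N ^ j :=
  (Set.ncard_le_ncard (hsphere_subset_hball j) (hball_finite j)).trans (ncard_hball_le j)

end HierGroup

lemma setOf_inInfiniteCluster_subset {N : ℕ} [NeZero N] {Ω : Type*}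
    {E : Sym2 (HierGroup N) → Ω → Bool} (k : ℕ) :
    {ω | InInfiniteCluster (graphOf E ω) 0} ⊆
      ⋃ m : ℕ, ⋃ a ∈ hball N k, ⋃ b ∈ hsphere N (m + (k + 1)), {ω | E s(a, b) ω = true} := by
  intro ω hω
  obtain ⟨a, ha, b, hb, hab⟩ :=
    SimpleGraph.exists_adj_of_inInfiniteCluster (hball_finite k) (zero_mem_hball k) hω
  have hbk : k < hdist 0 b := not_le.mp hb
  simp only [Set.mem_iUnion]
  exact ⟨hdist 0 b - (k + 1), a, ha, b, show hdist 0 b = _ by omega, hab.2⟩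

section UnionBound

variable {N : ℕ} {δ : ℝ} {c : ℕ → ℝ} {M : ℝ} {Ω : Type*} [MeasurableSpace Ω] {μ : Measure Ω}
  {E : Sym2 (HierGroup N) → Ω → Bool}

lemma measure_edge_le (hN : 1 ≤ N) (hδ : -1 ≤ δ) (hM0 : 0 ≤ M) (hM : ∀ k, 1 ≤ k → c k ≤ M)
    (hprob : EdgeProbOK N δ c μ E)
    {a b : HierGroup N} {j : ℕ} (hj0 : 0 < j) (hj : j ≤ hdist a b) :
    μ {ω | E s(a, b) ω = true} ≤
      ENNReal.ofReal M * ENNReal.ofReal ((N : ℝ) ^ (-(1 + δ))) ^ j := by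
  have hab : a ≠ b := by
    rintro rfl
    rw [hdist_self] at hj
    omega
  have hN' : (1 : ℝ) ≤ N := by exact_mod_cast hN
  rw [hprob a b hab, ← ENNReal.ofReal_pow (by positivity), ← ENNReal.ofReal_mul hM0,
    ← Real.rpow_mul_natCast (by positivity), neg_mul, Real.rpow_neg (by positivity),
    ← div_eq_mul_inv]
  refine ENNReal.ofReal_le_ofReal ((min_le_left _ _).trans ?_)
  calc c (hdist a b) / (N : ℝ) ^ ((hdist a b : ℝ) * (1 + δ))
      ≤ M / (N : ℝ) ^ ((hdist a b : ℝ) * (1 + δ)) := by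
        gcongr
        exact hM _ (by omega)
    _ ≤ M / (N : ℝ) ^ ((1 + δ) * j) := by
        rw [mul_comm (1 + δ)]
        gcongr
        linarith

lemma measure_inInfiniteCluster_le [NeZero N] (hN : 1 ≤ N) (hδ : -1 ≤ δ) (hM0 : 0 ≤ M)
    (hM : ∀ k, 1 ≤ k → c k ≤ M) (hprob : EdgeProbOK N δ c μ E) (k : ℕ) :
    μ {ω | InInfiniteCluster (graphOf E ω) 0} ≤
      ENNReal.ofReal M *
        ∑' m, ((N : ℝ≥0∞) ^ 2 * ENNReal.ofReal ((N : ℝ) ^ (-(1 + δ)))) ^ (m + (k + 1)) := by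
  set q := ENNReal.ofReal ((N : ℝ) ^ (-(1 + δ)))
  have hshell (m : ℕ) : μ (⋃ a ∈ hball N k, ⋃ b ∈ hsphere N (m + (k + 1)),
      {ω | E s(a, b) ω = true}) ≤ ENNReal.ofReal M * ((N : ℝ≥0∞) ^ 2 * q) ^ (m + (k + 1)) := by
    set j := m + (k + 1)
    have hNk : ((hball N k).ncard : ℝ≥0∞) ≤ (N : ℝ≥0∞) ^ j :=
      calc ((hball N k).ncard : ℝ≥0∞) ≤ (N : ℝ≥0∞) ^ k := by exact_mod_cast ncard_hball_le k
        _ ≤ (N : ℝ≥0∞) ^ j := pow_le_pow_right₀ (by exact_mod_cast hN) (by omega)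
    have hNj : ((hsphere N j).ncard : ℝ≥0∞) ≤ (N : ℝ≥0∞) ^ j := by
      exact_mod_cast ncard_hsphere_le j
    calc _ ≤ (hball N k).ncard * ((hsphere N j).ncard * (ENNReal.ofReal M * q ^ j)) := by
          refine measure_biUnion_le_ncard_mul μ (hball_finite k) fun a ha => ?_
          refine measure_biUnion_le_ncard_mul μ ((hball_finite j).subset
            (hsphere_subset_hball j)) fun b hb => ?_
          refine measure_edge_le hN hδ hM0 hM hprob (by omega) ?_
          have hbj : hdist 0 b = j := hb
          exact hbj ▸ hdist_zero_le_hdist ha (show ¬hdist 0 b ≤ k by omega)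
      _ ≤ (N : ℝ≥0∞) ^ j * ((N : ℝ≥0∞) ^ j * (ENNReal.ofReal M * q ^ j)) := by gcongr
      _ = ENNReal.ofReal M * ((N : ℝ≥0∞) ^ 2 * q) ^ j := by ring
  calc _ ≤ μ (⋃ m : ℕ, ⋃ a ∈ hball N k, ⋃ b ∈ hsphere N (m + (k + 1)),
        {ω | E s(a, b) ω = true}) := measure_mono (setOf_inInfiniteCluster_subset k)
    _ ≤ ∑' m, ENNReal.ofReal M * ((N : ℝ≥0∞) ^ 2 * q) ^ (m + (k + 1)) :=
        (measure_iUnion_le _).trans (ENNReal.tsum_le_tsum hshell)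
    _ = _ := ENNReal.tsum_mul_left

end UnionBound

lemma sq_mul_ofReal_rpow_lt_one {N : ℕ} {δ : ℝ} (hN : 1 < N) (hδ : 1 < δ) :
    (N : ℝ≥0∞) ^ 2 * ENNReal.ofReal ((N : ℝ) ^ (-(1 + δ))) < 1 := by
  have hN' : (1 : ℝ) < N := by exact_mod_cast hN
  have hsq : (N : ℝ≥0∞) ^ 2 = ENNReal.ofReal ((N : ℝ) ^ (2 : ℝ)) := by
    rw [Real.rpow_two, ENNReal.ofReal_pow (by positivity), ENNReal.ofReal_natCast]
  rw [hsq, ← ENNReal.ofReal_mul (by positivity), ← Real.rpow_add (by positivity),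
    ENNReal.ofReal_lt_one]
  exact Real.rpow_lt_one_of_one_lt_of_neg hN' (by linarith)

theorem no_percolation_of_one_lt_delta_general
    (N : ℕ) (hN : 2 ≤ N) (δ : ℝ) (hδ : 1 < δ)
    (c : ℕ → ℝ) (hc0 : ∀ k : ℕ, 1 ≤ k → 0 ≤ c k)
    (hcsup : ∃ M : ℝ, ∀ k : ℕ, 1 ≤ k → c k ≤ M)
    (Ω : Type) [MeasurableSpace Ω] (μ : Measure Ω)
    (E : Sym2 (HierGroup N) → Ω → Bool)
    (hprob : EdgeProbOK N δ c μ E) :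
    μ {ω | InInfiniteCluster (graphOf E ω) 0} = 0 := by
  have : NeZero N := ⟨by omega⟩
  obtain ⟨M, hM⟩ := hcsup
  have hM0 : 0 ≤ M := (hc0 1 le_rfl).trans (hM 1 le_rfl)
  have hr := sq_mul_ofReal_rpow_lt_one (by omega : 1 < N) hδ
  have htail := (ENNReal.tendsto_sum_nat_add _ (tsum_geometric_lt_top.mpr hr).ne).comp
    (tendsto_add_atTop_nat 1)
  have hbound := ENNReal.Tendsto.const_mul htail (Or.inr (ENNReal.ofReal_ne_top (r := M)))
  rw [mul_zero] at hbound
  exact nonpos_iff_eq_zero.mp <| ge_of_tendsto' hbound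
    (measure_inInfiniteCluster_le (by omega) (by linarith) hM0 hM hprob)

/-- If `δ > 1` and `sup_{k ≥ 1} c_k < ∞`, percolation does not occur:
the probability that `0` belongs to an infinite cluster is `0`. -/
theorem no_percolation_of_one_lt_delta
    (N : ℕ) (hN : 2 ≤ N) (δ : ℝ) (hδ : 1 < δ)
    (c : ℕ → ℝ) (hc0 : ∀ k : ℕ, 1 ≤ k → 0 ≤ c k)
    (hcsup : ∃ M : ℝ, ∀ k : ℕ, 1 ≤ k → c k ≤ M)
    (Ω : Type) [MeasurableSpace Ω] (μ : Measure Ω) [IsProbabilityMeasure μ]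
    (E : Sym2 (HierGroup N) → Ω → Bool)
    (hE : ∀ e, Measurable (E e))
    (hind : iIndepFun E μ)
    (hprob : EdgeProbOK N δ c μ E) :
    μ {ω | InInfiniteCluster (graphOf E ω) 0} = 0 :=
  no_percolation_of_one_lt_delta_general N hN δ hδ c hc0 hcsup Ω μ E hprob
end

section
/- Let δ = 1 and α > 2. There exists a constant C* > 0 such that if c_k = C_0 + C_1 log k + C_2 k^α with constants C_0, C_1, C_2 ≥ 0 satisfying max(C_0, C_1, C_2) < C*, then percolation does not occur in G_N. -/
open MeasureTheory ProbabilityTheory Filter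

/-!
For `δ = 1` a point at distance `k` from `0` is a neighbour of `0` with probability at most
`c_k / N^(2k)`, and there are at most `N^k` such points, so the mean degree is
`m ≤ ∑_k c_k / N^k`. This is finite for any `c_k` of polynomial growth, and it is `< 1` once
`C₀, C₁, C₂` are small. By independence a fixed trail of length `n` from `0` is open with
probability the product of its edge probabilities, so the expected number of points reachable
from `0` is at most `∑_n m^n < ∞`, and by Borel–Cantelli almost surely only finitely many are.
-/

open scoped ENNReal
open Function

lemma ENNReal.tsum_pi_prod_eq_pow {α : Type*} (f : α → ℝ≥0∞) (n : ℕ) :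
    ∑' z : Fin n → α, ∏ j, f (z j) = (∑' a, f a) ^ n := by
  induction n with
  | zero => simp
  | succ n ih =>
    rw [← (Fin.consEquiv fun _ => α).tsum_eq, ENNReal.tsum_prod', pow_succ', ← ih,
      ← ENNReal.tsum_mul_right]
    refine tsum_congr fun a => ?_
    rw [← ENNReal.tsum_mul_left]
    exact tsum_congr fun z => Fin.prod_univ_succ _

lemma measure_iInter_edge_open_eq_prod {Ω V ι : Type*} [MeasurableSpace Ω] {μ : Measure Ω}
    [Fintype ι] {E : Sym2 V → Ω → Bool} (hE : iIndepFun E μ) {e : ι → Sym2 V} (he : Injective e) :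
    μ (⋂ j, {ω | E (e j) ω = true}) = ∏ j, μ {ω | E (e j) ω = true} := by
  have h := (hE.precomp he).measure_inter_preimage_eq_mul Finset.univ
    (sets := fun _ => {true}) (fun _ _ => measurableSet_singleton true)
  simp only [Finset.mem_univ, Set.iInter_true] at h
  exact h

lemma measure_inInfiniteCluster_eq_zero {Ω V : Type*} [MeasurableSpace Ω] {μ : Measure Ω}
    [Countable V] {H : Ω → SimpleGraph V} {x : V}
    (h : ∑' y, μ {ω | (H ω).Reachable x y} ≠ ∞) :
    μ {ω | InInfiniteCluster (H ω) x} = 0 :=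
  ae_iff.mp (ae_finite_setOfPred_mem h)

section IncrementTrails

variable {G : Type*} [AddCommGroup G]

def incrementEdge {n : ℕ} (z : Fin n → G) (j : Fin n) : Sym2 G :=
  s(Fin.partialSum z j.castSucc, Fin.partialSum z j.succ)

/-- Walks from `0` are encoded by their increments, so that sums over all of them factor
(`ENNReal.tsum_pi_prod_eq_pow`). -/
def IsIncrementTrail (H : SimpleGraph G) {n : ℕ} (z : Fin n → G) : Prop :=
  Injective (incrementEdge z) ∧
    ∀ j : Fin n, H.Adj (Fin.partialSum z j.castSucc) (Fin.partialSum z j.succ)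

lemma exists_isIncrementTrail_of_reachable {H : SimpleGraph G} {y : G} (h : H.Reachable 0 y) :
    ∃ (n : ℕ) (z : Fin n → G), IsIncrementTrail H z ∧ Fin.partialSum z (Fin.last n) = y := by
  classical
  obtain ⟨w⟩ := h
  obtain ⟨q, hq⟩ := w.toPath
  set z : Fin q.length → G := fun j => q.getVert (j + 1) - q.getVert j
  have hsum : Fin.partialSum z = fun i : Fin (q.length + 1) => q.getVert i := by
    simpa [z, sub_eq_neg_add] using
      Fin.partialSum_left_neg (fun i : Fin (q.length + 1) => q.getVert i)
  refine ⟨q.length, z, ⟨fun i j hij => ?_, fun j => ?_⟩, by simp [hsum]⟩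
  · simp only [incrementEdge, hsum, Sym2.eq_iff] at hij
    have hinj := hq.getVert_injOn
    rcases hij with ⟨h1, -⟩ | ⟨h1, h2⟩
    · exact Fin.ext (hinj (by simp) (by simp) h1)
    · have e1 : (i : ℕ) = j + 1 := by simpa using hinj (by simp) (by simp) h1
      have e2 : (i : ℕ) + 1 = j := by simpa using hinj (by simp) (by simp) h2
      omega
  · simpa [hsum] using q.adj_getVert_succ j.isLt

variable {Ω : Type*} [MeasurableSpace Ω] {μ : Measure Ω}

lemma measure_isIncrementTrail_le {E : Sym2 G → Ω → Bool} (hE : iIndepFun E μ) {w : G → ℝ≥0∞}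
    (hw : ∀ x y, x ≠ y → μ {ω | E s(x, y) ω = true} ≤ w (y - x)) {n : ℕ} (z : Fin n → G) :
    μ {ω | IsIncrementTrail (graphOf E ω) z} ≤ ∏ j, w (z j) := by
  rcases Set.eq_empty_or_nonempty {ω | IsIncrementTrail (graphOf E ω) z} with h | ⟨ω₀, hinj, hadj⟩
  · simp [h]
  calc μ {ω | IsIncrementTrail (graphOf E ω) z}
      ≤ μ (⋂ j, {ω | E (incrementEdge z j) ω = true}) :=
        measure_mono fun ω hω => Set.mem_iInter.2 fun j => (hω.2 j).2
    _ = ∏ j, μ {ω | E (incrementEdge z j) ω = true} := measure_iInter_edge_open_eq_prod hE hinj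
    _ ≤ ∏ j, w (z j) := by
        gcongr with j
        simpa [incrementEdge, sub_eq_neg_add, Fin.partialSum_right_neg] using hw _ _ (hadj j).1

theorem tsum_measure_reachable_le [Countable G] {E : Sym2 G → Ω → Bool} (hE : iIndepFun E μ)
    {w : G → ℝ≥0∞} (hw : ∀ x y, x ≠ y → μ {ω | E s(x, y) ω = true} ≤ w (y - x)) :
    ∑' y, μ {ω | (graphOf E ω).Reachable 0 y} ≤ ∑' n : ℕ, (∑' v, w v) ^ n := by
  set endpoint : (Σ n, Fin n → G) → G := fun p => Fin.partialSum p.2 (Fin.last p.1)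
  have hreach : ∀ y, μ {ω | (graphOf E ω).Reachable 0 y} ≤
      ∑' p : endpoint ⁻¹' {y}, ∏ j, w ((p : Σ n, Fin n → G).2 j) := by
    intro y
    calc μ {ω | (graphOf E ω).Reachable 0 y}
        ≤ μ (⋃ p : endpoint ⁻¹' {y},
            {ω | IsIncrementTrail (graphOf E ω) (p : Σ n, Fin n → G).2}) := by
          refine measure_mono fun ω hω => ?_
          obtain ⟨n, z, hz, hend⟩ := exists_isIncrementTrail_of_reachable hω
          exact Set.mem_iUnion.2 ⟨⟨⟨n, z⟩, hend⟩, hz⟩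
      _ ≤ _ := (measure_iUnion_le _).trans
          (ENNReal.tsum_le_tsum fun p => measure_isIncrementTrail_le hE hw _)
  calc ∑' y, μ {ω | (graphOf E ω).Reachable 0 y}
      ≤ ∑' y, ∑' p : endpoint ⁻¹' {y}, ∏ j, w ((p : Σ n, Fin n → G).2 j) :=
        ENNReal.tsum_le_tsum hreach
    _ = ∑' p : Σ n, Fin n → G, ∏ j, w (p.2 j) :=
        ENNReal.tsum_fiberwise (fun p : Σ n, Fin n → G => ∏ j, w (p.2 j)) endpoint
    _ = ∑' n : ℕ, (∑' v, w v) ^ n := by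
        rw [ENNReal.tsum_sigma']
        exact tsum_congr fun n => ENNReal.tsum_pi_prod_eq_pow w n

end IncrementTrails

namespace HierGroup

variable {N : ℕ}

lemma hdist_eq_hdist_zero_sub (x y : HierGroup N) : hdist x y = hdist 0 (y - x) := by
  rw [hdist, hdist, zero_sub, neg_sub]

lemma lt_hdist_zero_of_apply_ne_zero {v : HierGroup N} {i : ℕ} (h : v i ≠ 0) :
    i < hdist 0 v := by
  rw [hdist, zero_sub, Finsupp.support_neg]
  exact Finset.le_sup (f := fun i => i + 1) (Finsupp.mem_support_iff.2 h)

lemma hdist_zero_ne_zero {v : HierGroup N} (hv : v ≠ 0) : hdist 0 v ≠ 0 := by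
  obtain ⟨i, hi⟩ := DFunLike.ne_iff.1 hv
  exact (lt_hdist_zero_of_apply_ne_zero hi).ne_bot

/-- There are at most `N ^ k` points at distance `k` from `0`. -/
lemma tsum_comp_hdist_zero_le [NeZero N] (g : ℕ → ℝ≥0∞) :
    ∑' v : HierGroup N, g (hdist 0 v) ≤ ∑' k, (N : ℝ≥0∞) ^ k * g k := by
  rw [← ENNReal.tsum_fiberwise _ (hdist (0 : HierGroup N))]
  refine ENNReal.tsum_le_tsum fun k => ?_
  have hinj :
      Injective fun (v : hdist (0 : HierGroup N) ⁻¹' {k}) (i : Fin k) => (v : HierGroup N) i := by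
    intro u v huv
    ext i
    by_cases hik : i < k
    · exact congrFun huv ⟨i, hik⟩
    · have hzero (v : hdist (0 : HierGroup N) ⁻¹' {k}) : (v : HierGroup N) i = 0 := by
        by_contra hv
        exact hik (v.2 ▸ lt_hdist_zero_of_apply_ne_zero hv)
      rw [hzero u, hzero v]
  calc ∑' v : hdist (0 : HierGroup N) ⁻¹' {k}, g (hdist 0 (v : HierGroup N))
      = ∑' _ : hdist (0 : HierGroup N) ⁻¹' {k}, g k := tsum_congr fun v => congrArg g v.2
    _ ≤ ∑' _ : Fin k → ZMod N, g k := ENNReal.tsum_comp_le_tsum_of_injective hinj _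
    _ = (N : ℝ≥0∞) ^ k * g k := by simp [ZMod.card]

end HierGroup

/-- No edge has length `0`; the value `0` there keeps the point `0` itself out of the mean degree
`∑' v, edgeWeight N δ c (hdist 0 v)`. -/
noncomputable def edgeWeight (N : ℕ) (δ : ℝ) (c : ℕ → ℝ) (k : ℕ) : ℝ≥0∞ :=
  if k = 0 then 0 else ENNReal.ofReal (c k / (N : ℝ) ^ ((k : ℝ) * (1 + δ)))

lemma EdgeProbOK.measure_le_edgeWeight {N : ℕ} {δ : ℝ} {c : ℕ → ℝ} {Ω : Type*}
    [MeasurableSpace Ω] {μ : Measure Ω} {E : Sym2 (HierGroup N) → Ω → Bool}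
    (h : EdgeProbOK N δ c μ E) {x y : HierGroup N} (hxy : x ≠ y) :
    μ {ω | E s(x, y) ω = true} ≤ edgeWeight N δ c (hdist 0 (y - x)) := by
  rw [h x y hxy, edgeWeight, if_neg (HierGroup.hdist_zero_ne_zero (sub_ne_zero.2 hxy.symm)),
    HierGroup.hdist_eq_hdist_zero_sub]
  exact ENNReal.ofReal_le_ofReal (min_le_left _ _)

lemma tsum_pow_mul_edgeWeight_one_le {N : ℕ} (hN : 2 ≤ N) {c : ℕ → ℝ} {C : ℝ} (hC : 0 ≤ C)
    {d : ℕ} (hc : ∀ k, 1 ≤ k → c k ≤ C * k ^ d) :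
    ∑' k, (N : ℝ≥0∞) ^ k * edgeWeight N 1 c k ≤
      ENNReal.ofReal (C * ∑' k : ℕ, (k : ℝ) ^ d * 2⁻¹ ^ k) := by
  have hsum : Summable fun k : ℕ => (k : ℝ) ^ d * 2⁻¹ ^ k :=
    summable_pow_mul_geometric_of_norm_lt_one d (by norm_num)
  rw [← tsum_mul_left, ENNReal.ofReal_tsum_of_nonneg (fun k => by positivity) (hsum.mul_left C)]
  refine ENNReal.tsum_le_tsum fun k => ?_
  rcases Nat.eq_zero_or_pos k with rfl | hk
  · simp [edgeWeight]
  have hNk : (2 : ℝ) ^ k ≤ (N : ℝ) ^ k := pow_le_pow_left₀ (by norm_num) (by exact_mod_cast hN) k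
  rw [edgeWeight, if_neg hk.ne', ← ENNReal.ofReal_natCast, ← ENNReal.ofReal_pow (by positivity),
    ← ENNReal.ofReal_mul (by positivity)]
  refine ENNReal.ofReal_le_ofReal ?_
  calc (N : ℝ) ^ k * (c k / (N : ℝ) ^ ((k : ℝ) * (1 + 1)))
      = c k / (N : ℝ) ^ k := by
        rw [show (k : ℝ) * (1 + 1) = ((k + k : ℕ) : ℝ) by push_cast; ring, Real.rpow_natCast,
          pow_add]
        field_simp
    _ ≤ C * k ^ d / 2 ^ k := div_le_div₀ (by positivity) (hc k hk) (by positivity) hNk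
    _ = C * (k ^ d * 2⁻¹ ^ k) := by rw [inv_pow]; ring

lemma add_mul_log_add_mul_rpow_le {C₀ C₁ C₂ C α : ℝ} (hC : 0 ≤ C) (h₀ : C₀ ≤ C) (h₁ : C₁ ≤ C)
    (h₂ : C₂ ≤ C) {k : ℕ} (hk : 1 ≤ k) :
    C₀ + C₁ * Real.log k + C₂ * (k : ℝ) ^ α ≤ 3 * C * (k : ℝ) ^ (⌈α⌉₊ + 1) := by
  have hk1 : (1 : ℝ) ≤ k := by exact_mod_cast hk
  have hpow : (1 : ℝ) ≤ (k : ℝ) ^ (⌈α⌉₊ + 1) := one_le_pow₀ hk1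
  have hlog : Real.log k ≤ (k : ℝ) ^ (⌈α⌉₊ + 1) :=
    (Real.log_le_self (by positivity)).trans (le_self_pow₀ hk1 (by omega))
  have hrpow : (k : ℝ) ^ α ≤ (k : ℝ) ^ (⌈α⌉₊ + 1) := by
    rw [← Real.rpow_natCast]
    exact Real.rpow_le_rpow_of_exponent_le hk1 ((Nat.le_ceil α).trans (by simp))
  have hlog0 := Real.log_nonneg hk1
  have hrpow0 : 0 ≤ (k : ℝ) ^ α := by positivity
  linarith [mul_le_mul_of_nonneg_right h₁ hlog0, mul_le_mul_of_nonneg_right h₂ hrpow0,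
    mul_le_mul_of_nonneg_left hlog hC, mul_le_mul_of_nonneg_left hrpow hC,
    mul_le_mul_of_nonneg_left hpow hC]

theorem critical_no_percolation_of_small_constants_general
    (N : ℕ) (hN : 2 ≤ N) (α : ℝ) :
    ∃ Cstar : ℝ, 0 < Cstar ∧
      ∀ C0 C1 C2 : ℝ, 0 ≤ C0 → 0 ≤ C1 → 0 ≤ C2 → max (max C0 C1) C2 < Cstar →
      ∀ (Ω : Type) [MeasurableSpace Ω] (μ : Measure Ω) [IsProbabilityMeasure μ]
        (E : Sym2 (HierGroup N) → Ω → Bool),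
        (∀ e, Measurable (E e)) →
        iIndepFun E μ →
        EdgeProbOK N 1 (fun k => C0 + C1 * Real.log k + C2 * (k : ℝ) ^ α) μ E →
        μ {ω | InInfiniteCluster (graphOf E ω) 0} = 0 := by
  have : NeZero N := ⟨by omega⟩
  set S := ∑' k : ℕ, (k : ℝ) ^ (⌈α⌉₊ + 1) * 2⁻¹ ^ k
  have hS : 0 ≤ S := tsum_nonneg fun k => by positivity
  refine ⟨1 / (3 * S + 1), by positivity, ?_⟩
  intro C0 C1 C2 _ _ _ hC Ω _ μ _ E _ hE hp
  obtain ⟨⟨h₀, h₁⟩, h₂⟩ := by simpa only [max_lt_iff] using hC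
  set c : ℕ → ℝ := fun k => C0 + C1 * Real.log k + C2 * (k : ℝ) ^ α
  have hmean : ∑' v : HierGroup N, edgeWeight N 1 c (hdist 0 v) < 1 :=
    calc ∑' v : HierGroup N, edgeWeight N 1 c (hdist 0 v)
        ≤ ∑' k, (N : ℝ≥0∞) ^ k * edgeWeight N 1 c k := HierGroup.tsum_comp_hdist_zero_le _
      _ ≤ ENNReal.ofReal (3 * (1 / (3 * S + 1)) * S) :=
          tsum_pow_mul_edgeWeight_one_le hN (by positivity) fun k hk =>
            add_mul_log_add_mul_rpow_le (by positivity) h₀.le h₁.le h₂.le hk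
      _ < 1 := by
          rw [ENNReal.ofReal_lt_one, mul_one_div, div_mul_eq_mul_div, div_lt_one (by positivity)]
          linarith
  refine measure_inInfiniteCluster_eq_zero (ne_top_of_le_ne_top ?_
    (tsum_measure_reachable_le hE (w := fun v => edgeWeight N 1 c (hdist 0 v))
      fun x y hxy => hp.measure_le_edgeWeight hxy))
  exact (tsum_geometric_lt_top.2 hmean).ne

/-- Critical case `δ = 1`, `α > 2`: there exists `C* > 0` such that if
`c_k = C₀ + C₁ log k + C₂ k^α` with `max (C₀, C₁, C₂) < C*`, percolation does
not occur. -/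
theorem critical_no_percolation_of_small_constants
    (N : ℕ) (hN : 2 ≤ N) (α : ℝ) (hα : 2 < α) :
    ∃ Cstar : ℝ, 0 < Cstar ∧
      ∀ C0 C1 C2 : ℝ, 0 ≤ C0 → 0 ≤ C1 → 0 ≤ C2 → max (max C0 C1) C2 < Cstar →
      ∀ (Ω : Type) [MeasurableSpace Ω] (μ : Measure Ω) [IsProbabilityMeasure μ]
        (E : Sym2 (HierGroup N) → Ω → Bool),
        (∀ e, Measurable (E e)) →
        iIndepFun E μ →
        EdgeProbOK N 1 (fun k => C0 + C1 * Real.log k + C2 * (k : ℝ) ^ α) μ E →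
        μ {ω | InInfiniteCluster (graphOf E ω) 0} = 0 :=
  critical_no_percolation_of_small_constants_general N hN α
end
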